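/- Let M ∈ ℝ^{d1×d2} be a matrix of rank at most r with thin SVD M = U Σ Vᵀ (U ∈ ℝ^{d1×r}, V ∈ ℝ^{d2×r} having orthonormal columns), and let T be the tangent space of 𝕄_r at M, so that the orthogonal projection of a matrix G onto T is P_T(G) = UUᵀG + GVVᵀ − UUᵀGVVᵀ. Then for every matrix G ∈ ℝ^{d1×d2} (in particular for every sub-gradient of the objective at M): ‖P_T(G)‖_F ≤ √2 · ‖G‖_{F,r}. -/

import Mathlib

open MeasureTheory ProbabilityTheory Matrix Real Set
open scoped ENNReal NNReal ProbabilityTheory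

noncomputable section

namespace Paper

/-- Trace inner product `⟨A,B⟩ = tr(AᵀB)`. -/
def minner {m n : Type*} [Fintype m] [Fintype n] (A B : Matrix m n ℝ) : ℝ :=
  ∑ i, ∑ j, A i j * B i j

/-- Frobenius norm. -/
def frob {m n : Type*} [Fintype m] [Fintype n] (A : Matrix m n ℝ) : ℝ :=
  Real.sqrt (∑ i, ∑ j, (A i j) ^ 2)

/-- `ℓ₂`-operator norm of a matrix. -/
def opNorm {m n : Type*} [Fintype m] [Fintype n] (A : Matrix m n ℝ) : ℝ :=
  sSup {c | ∃ v : n → ℝ, (∑ j, (v j) ^ 2) ≤ 1 ∧ c = Real.sqrt (∑ i, (A.mulVec v i) ^ 2)}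

/-- `B` is a best rank-`r` approximation of `A` in Frobenius norm, i.e. `B = SVD_r(A)`. -/
def IsSVDApprox {m n : Type*} [Fintype m] [Fintype n] (r : ℕ) (A B : Matrix m n ℝ) : Prop :=
  B.rank ≤ r ∧ ∀ C : Matrix m n ℝ, C.rank ≤ r → frob (A - B) ≤ frob (A - C)

/-- Truncated Frobenius norm `‖A‖_{F,r} = ‖SVD_r(A)‖_F`. -/
def truncFrob {m n : Type*} [Fintype m] [Fintype n] (r : ℕ) (A : Matrix m n ℝ) : ℝ :=
  sSup {x | ∃ B : Matrix m n ℝ, IsSVDApprox r A B ∧ x = frob B}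

/-- The `k`-th largest singular value `σ_k(A)`, characterized via Eckart–Young:
`σ_k(A) = inf {‖A − B‖ : rank B < k}`. -/
def singVal {m n : Type*} [Fintype m] [Fintype n] (k : ℕ) (A : Matrix m n ℝ) : ℝ :=
  sInf {c | ∃ B : Matrix m n ℝ, B.rank < k ∧ c = opNorm (A - B)}

/-- `G ∈ ∂f(M)`: sub-gradient of a (convex) function on matrices. -/
def IsSubgradient {m n : Type*} [Fintype m] [Fintype n]
    (f : Matrix m n ℝ → ℝ) (M G : Matrix m n ℝ) : Prop :=
  ∀ N, f M + minner G (N - M) ≤ f N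

/-- Dual-phase regularity conditions with parameters `τc > τs > 0`, `μc, μs, Lc, Ls > 0`. -/
def DualPhase {m n : Type*} [Fintype m] [Fintype n] (r : ℕ)
    (f : Matrix m n ℝ → ℝ) (Mstar : Matrix m n ℝ)
    (τc τs μc μs Lc Ls : ℝ) : Prop :=
  τs < τc ∧ 0 < τs ∧ 0 < μc ∧ 0 < μs ∧ 0 < Lc ∧ 0 < Ls ∧
  (∀ M : Matrix m n ℝ, M.rank ≤ r → τc ≤ frob (M - Mstar) →
    (μc * frob (M - Mstar) ≤ f M - f Mstar ∧
     ∀ G, IsSubgradient f M G → truncFrob r G ≤ Lc)) ∧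
  (∀ M : Matrix m n ℝ, M.rank ≤ r → τs ≤ frob (M - Mstar) → frob (M - Mstar) < τc →
    (μs * frob (M - Mstar) ^ 2 ≤ f M - f Mstar ∧
     ∀ G, IsSubgradient f M G → truncFrob r G ≤ Ls * frob (M - Mstar)))

/-- Projection onto the tangent space of the rank-`r` manifold at a point with
thin SVD factors `U, V`. -/
def tangentProj {d1 d2 r : ℕ} (U : Matrix (Fin d1) (Fin r) ℝ) (V : Matrix (Fin d2) (Fin r) ℝ)
    (G : Matrix (Fin d1) (Fin d2) ℝ) : Matrix (Fin d1) (Fin d2) ℝ :=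
  U * Uᵀ * G + G * V * Vᵀ - U * Uᵀ * G * V * Vᵀ

/-- A run of the Riemannian sub-gradient descent (RsGrad) algorithm:
`M (l+1) = SVD_r (M l - η l • P_{T_l}(G l))` for some sub-gradient `G l ∈ ∂f(M l)`,
where `T_l` is the tangent space at `M l` determined by thin-SVD factors `U, V` of `M l`. -/
def IsRsGradRun {d1 d2 : ℕ} (r : ℕ) (f : Matrix (Fin d1) (Fin d2) ℝ → ℝ)
    (M : ℕ → Matrix (Fin d1) (Fin d2) ℝ) (η : ℕ → ℝ) : Prop :=
  (M 0).rank ≤ r ∧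
  ∀ l : ℕ, ∃ (G : Matrix (Fin d1) (Fin d2) ℝ)
      (U : Matrix (Fin d1) (Fin r) ℝ) (V : Matrix (Fin d2) (Fin r) ℝ),
    IsSubgradient f (M l) G ∧
    Uᵀ * U = 1 ∧ Vᵀ * V = 1 ∧
    U * Uᵀ * M l = M l ∧ M l * (V * Vᵀ) = M l ∧
    IsSVDApprox r (M l - η l • tangentProj U V G) (M (l + 1))

/-- All entries of all measurement matrices together with all noise variables,
as one family of real random variables (used to state joint independence). -/
def entriesNoise {Ω : Type*} {d1 d2 n : ℕ} (X : Fin n → Ω → Matrix (Fin d1) (Fin d2) ℝ)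
    (ξ : Fin n → Ω → ℝ) : (Fin n × Fin d1 × Fin d2) ⊕ Fin n → Ω → ℝ :=
  Sum.elim (fun p ω => X p.1 ω p.2.1 p.2.2) ξ

/-- The trace-regression sampling model: all entries of the `X i` and all noise
variables `ξ i` are jointly independent, the entries of the `X i` are standard
Gaussian, and each `ξ i` has law `ν`. -/
def TraceModel {Ω : Type} [MeasureSpace Ω] {d1 d2 n : ℕ}
    (X : Fin n → Ω → Matrix (Fin d1) (Fin d2) ℝ) (ξ : Fin n → Ω → ℝ)
    (ν : Measure ℝ) : Prop :=
  IsProbabilityMeasure (ℙ : Measure Ω) ∧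
  (∀ i a b, Measurable fun ω => X i ω a b) ∧
  (∀ i, Measurable (ξ i)) ∧
  iIndepFun (entriesNoise X ξ) ℙ ∧
  (∀ i a b, Measure.map (fun ω => X i ω a b) ℙ = gaussianReal 0 1) ∧
  (∀ i, Measure.map (ξ i) ℙ = ν)

/-- The response `Y i = ⟨X i, M*⟩ + ξ i`. -/
def obsY {Ω : Type} {d1 d2 n : ℕ} (X : Fin n → Ω → Matrix (Fin d1) (Fin d2) ℝ)
    (ξ : Fin n → Ω → ℝ) (Mstar : Matrix (Fin d1) (Fin d2) ℝ) (i : Fin n) (ω : Ω) : ℝ :=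
  minner (X i ω) Mstar + ξ i ω

/-- Absolute-loss objective `f(M) = Σ_i |Y i − ⟨M, X i⟩|`. -/
def absObj {d1 d2 n : ℕ} (X : Fin n → Matrix (Fin d1) (Fin d2) ℝ) (Y : Fin n → ℝ)
    (M : Matrix (Fin d1) (Fin d2) ℝ) : ℝ :=
  ∑ i, |Y i - minner M (X i)|

/-- Huber loss `ρ_{H,δ}`. -/
def huberLoss (δ x : ℝ) : ℝ := if |x| ≤ δ then x ^ 2 else 2 * δ * |x| - δ ^ 2

/-- Huber objective. -/
def huberObj {d1 d2 n : ℕ} (δ : ℝ) (X : Fin n → Matrix (Fin d1) (Fin d2) ℝ) (Y : Fin n → ℝ)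
    (M : Matrix (Fin d1) (Fin d2) ℝ) : ℝ :=
  ∑ i, huberLoss δ (Y i - minner M (X i))

/-- Quantile loss `ρ_{Q,δ}`. -/
def quantLoss (δ x : ℝ) : ℝ := if 0 ≤ x then δ * x else (δ - 1) * x

/-- Quantile objective. -/
def quantObj {d1 d2 n : ℕ} (δ : ℝ) (X : Fin n → Matrix (Fin d1) (Fin d2) ℝ) (Y : Fin n → ℝ)
    (M : Matrix (Fin d1) (Fin d2) ℝ) : ℝ :=
  ∑ i, quantLoss δ (Y i - minner M (X i))

/-- General objective `f(M) = Σ_i ρ(⟨M, X i⟩ − Y i)` for a loss `ρ`. -/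
def genObj {d1 d2 n : ℕ} (ρ : ℝ → ℝ) (X : Fin n → Matrix (Fin d1) (Fin d2) ℝ) (Y : Fin n → ℝ)
    (M : Matrix (Fin d1) (Fin d2) ℝ) : ℝ :=
  ∑ i, ρ (minner M (X i) - Y i)

/-- Cumulative distribution function of a measure on `ℝ`. -/
def cdfOf (ν : Measure ℝ) (x : ℝ) : ℝ := (ν (Set.Iic x)).toReal

/-- Heavy-tailed noise assumption I. -/
def HeavyTailedI (ν : Measure ℝ) (ε γ b0 b1 : ℝ) (h : ℝ → ℝ) : Prop :=
  IsProbabilityMeasure ν ∧ 0 < ε ∧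
  Integrable (fun x => |x| ^ (1 + ε)) ν ∧
  ν (Set.Iic 0) = 1 / 2 ∧
  γ = ∫ x, |x| ∂ν ∧
  0 < b0 ∧ 0 < b1 ∧
  ν = volume.withDensity (fun x => ENNReal.ofReal (h x)) ∧
  (∀ x : ℝ, |x| ≤ 30 * γ → b0⁻¹ ≤ h x) ∧
  (∀ x : ℝ, h x ≤ b1⁻¹)

/-- Heavy-tailed noise assumption II (for the Huber loss with parameter `δ`). -/
def HeavyTailedII (ν : Measure ℝ) (ε γ δ b0 b1 : ℝ) : Prop :=
  IsProbabilityMeasure ν ∧ 0 < ε ∧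
  Integrable (fun x => |x| ^ (1 + ε)) ν ∧
  (∀ x : ℝ, cdfOf ν x = 1 - cdfOf ν (-x)) ∧
  γ = ∫ x, |x| ∂ν ∧
  0 < δ ∧ 0 < b0 ∧ 0 < b1 ∧
  (∀ x : ℝ, |x| ≤ 24 * γ + 2 * δ → 2 * δ * b0⁻¹ ≤ cdfOf ν (x + δ) - cdfOf ν (x - δ)) ∧
  (∀ x : ℝ, cdfOf ν (x + δ) - cdfOf ν (x - δ) ≤ 2 * δ * b1⁻¹)

/-- Heavy-tailed noise assumption III (for the quantile loss). -/
def HeavyTailedIII (ν : Measure ℝ) (ε γ δ b0 b1 : ℝ) (h : ℝ → ℝ) : Prop :=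
  IsProbabilityMeasure ν ∧ 0 < ε ∧
  Integrable (fun x => |x| ^ (1 + ε)) ν ∧
  δ = cdfOf ν 0 ∧ 0 < δ ∧ δ < 1 ∧
  γ = ∫ x, |x| ∂ν ∧
  0 < b0 ∧ 0 < b1 ∧
  ν = volume.withDensity (fun x => ENNReal.ofReal (h x)) ∧
  (∀ x : ℝ, |x| ≤ 15 * γ * max δ (1 - δ) → b0⁻¹ ≤ h x) ∧
  (∀ x : ℝ, h x ≤ b1⁻¹)



set_option linter.unusedSectionVars false
open Module

section Aux
variable {m n : Type*} [Fintype m] [Fintype n]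

def toE (A : Matrix m n ℝ) : EuclideanSpace ℝ (m × n) := WithLp.toLp 2 (fun p : m × n => A p.1 p.2)

lemma toE_sub (A B : Matrix m n ℝ) : toE (A - B) = toE A - toE B := rfl
lemma toE_add (A B : Matrix m n ℝ) : toE (A + B) = toE A + toE B := rfl
lemma toE_smul (t : ℝ) (A : Matrix m n ℝ) : toE (t • A) = t • toE A := rfl

lemma frob_eq_norm (A : Matrix m n ℝ) : frob A = ‖toE A‖ := by
  rw [EuclideanSpace.norm_eq, frob]
  congr 1
  rw [Fintype.sum_prod_type]
  simp [toE, sq_abs]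

lemma minner_eq_inner (A B : Matrix m n ℝ) : minner A B = inner ℝ (toE A) (toE B) := by
  simp [PiLp.inner_apply, RCLike.inner_apply, minner, toE, Fintype.sum_prod_type]
  exact Finset.sum_congr rfl fun _ _ => Finset.sum_congr rfl fun _ _ => mul_comm _ _

lemma minner_eq_trace (A B : Matrix m n ℝ) : minner A B = (Aᵀ * B).trace := by
  simp [Matrix.trace, Matrix.mul_apply, minner, Matrix.diag]
  exact Finset.sum_comm

lemma frob_nonneg (A : Matrix m n ℝ) : 0 ≤ frob A := Real.sqrt_nonneg _

lemma sq_frob (A : Matrix m n ℝ) : frob A ^ 2 = minner A A := by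
  rw [frob_eq_norm, minner_eq_inner, ← real_inner_self_eq_norm_sq]

lemma frob_eq_sqrt (A : Matrix m n ℝ) : frob A = Real.sqrt (minner A A) := by
  rw [← sq_frob, Real.sqrt_sq (frob_nonneg A)]

lemma pythag {A B : Matrix m n ℝ} (h : minner A B = 0) :
    frob (A + B) ^ 2 = frob A ^ 2 + frob B ^ 2 := by
  rw [frob_eq_norm, frob_eq_norm, frob_eq_norm, toE_add, norm_add_sq_real]
  rw [minner_eq_inner] at h
  rw [h]; ring

lemma frob_sub_rev (A B : Matrix m n ℝ) : frob (A - B) = frob (B - A) := by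
  rw [frob_eq_norm, frob_eq_norm, toE_sub, toE_sub, norm_sub_rev]

lemma frob_add_le (A B : Matrix m n ℝ) : frob (A + B) ≤ frob A + frob B := by
  rw [frob_eq_norm, frob_eq_norm, frob_eq_norm, toE_add]; exact norm_add_le _ _

lemma frob_mul_orth {r : Type*} [Fintype r] [DecidableEq r] {B : Matrix m r ℝ} (h : Bᵀ * B = 1)
    (X : Matrix r n ℝ) : frob (B * X) = frob X := by
  rw [frob_eq_sqrt, frob_eq_sqrt, minner_eq_trace, minner_eq_trace]
  rw [Matrix.transpose_mul, Matrix.mul_assoc, ← Matrix.mul_assoc Bᵀ B X, h, Matrix.one_mul]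


lemma frob_nonneg' (A : Matrix m n ℝ) : 0 ≤ frob A := Real.sqrt_nonneg _

lemma frob_zero : frob (0 : Matrix m n ℝ) = 0 := by simp [frob]

lemma frob_continuous : Continuous (frob : Matrix m n ℝ → ℝ) := by
  apply Real.continuous_sqrt.comp
  refine continuous_finset_sum _ fun i _ => continuous_finset_sum _ fun j _ => ?_
  exact ((continuous_apply j).comp (continuous_apply i)).pow 2

lemma frob_entry_bound {A : Matrix m n ℝ} {R : ℝ} (hR : 0 ≤ R) (h : frob A ≤ R)
    (i : m) (j : n) : A i j ∈ Set.Icc (-R) R := by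
  have hS : 0 ≤ ∑ i, ∑ j, (A i j) ^ 2 :=
    Finset.sum_nonneg fun _ _ => Finset.sum_nonneg fun _ _ => sq_nonneg _
  have hSR : ∑ i, ∑ j, (A i j) ^ 2 ≤ R ^ 2 := by
    rw [← Real.sq_sqrt hS]
    exact pow_le_pow_left₀ (Real.sqrt_nonneg _) h 2
  have h1 : (A i j) ^ 2 ≤ ∑ j', (A i j') ^ 2 :=
    Finset.single_le_sum (f := fun j' => (A i j') ^ 2) (fun _ _ => sq_nonneg _)
      (Finset.mem_univ j)
  have h2 : ∑ j', (A i j') ^ 2 ≤ ∑ i', ∑ j', (A i' j') ^ 2 :=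
    Finset.single_le_sum (f := fun i' => ∑ j', (A i' j') ^ 2)
      (fun _ _ => Finset.sum_nonneg fun _ _ => sq_nonneg _) (Finset.mem_univ i)
  have habs : |A i j| ≤ R := by
    have := Real.sqrt_le_sqrt (le_trans h1 (le_trans h2 hSR))
    rwa [Real.sqrt_sq_eq_abs, Real.sqrt_sq hR] at this
  exact ⟨neg_le_of_abs_le habs, le_of_abs_le habs⟩

end Aux

lemma exists_orth_factor {d1 d2 r : ℕ} (hr : r ≤ d1) (A : Matrix (Fin d1) (Fin d2) ℝ)
    (hA : A.rank ≤ r) :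
    ∃ B : Matrix (Fin d1) (Fin r) ℝ, Bᵀ * B = 1 ∧ B * (Bᵀ * A) = A := by
  classical
  set E := EuclideanSpace ℝ (Fin d1)
  let e : (Fin d1 → ℝ) ≃ₗ[ℝ] E := (WithLp.linearEquiv 2 ℝ (Fin d1 → ℝ)).symm
  let W : Submodule ℝ E := Submodule.map e.toLinearMap (Submodule.span ℝ (Set.range Aᵀ))
  have hcol : ∀ j : Fin d2, (e (Aᵀ j)) ∈ W :=
    fun j => Submodule.mem_map_of_mem (Submodule.subset_span ⟨j, rfl⟩)
  have hWr : finrank ℝ W ≤ r := by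
    have h1 : finrank ℝ W = finrank ℝ (Submodule.span ℝ (Set.range Aᵀ)) :=
      LinearEquiv.finrank_map_eq e _
    rw [h1]
    rw [Matrix.rank_eq_finrank_span_cols] at hA
    exact hA
  set k := finrank ℝ W with hk
  have hkr : k ≤ r := hWr
  have hkd1 : k ≤ d1 := hkr.trans hr
  let bW : OrthonormalBasis (Fin k) ℝ W := stdOrthonormalBasis ℝ W
  let v : Fin d1 → E := fun i => if h : (i : ℕ) < k then (bW ⟨i, h⟩ : E) else 0
  let s : Set (Fin d1) := {i | (i : ℕ) < k}
  have hv : Orthonormal ℝ (s.restrict v) := by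
    rw [orthonormal_iff_ite]
    intro i j
    have hi : ((i : Fin d1) : ℕ) < k := i.2
    have hj : ((j : Fin d1) : ℕ) < k := j.2
    simp only [Set.restrict, Set.domRestrict_apply, v, dif_pos hi, dif_pos hj]
    rw [← Submodule.coe_inner]
    rw [orthonormal_iff_ite.mp bW.orthonormal]
    congr 1
    simp only [eq_iff_iff, Fin.mk_eq_mk]
    exact ⟨fun h => Subtype.ext (Fin.ext h), fun h => by rw [h]⟩
  have card_eq : finrank ℝ E = Fintype.card (Fin d1) := by
    rw [Fintype.card_fin]
    exact finrank_euclideanSpace_fin (𝕜 := ℝ) (n := d1)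
  obtain ⟨b, hb⟩ := hv.exists_orthonormalBasis_extension_of_card_eq card_eq
  -- key vanishing: inner (b i) x = 0 for x ∈ W and k ≤ i
  have hvan : ∀ x : E, x ∈ W → ∀ i : Fin d1, k ≤ (i : ℕ) → (inner ℝ (b i) x : ℝ) = 0 := by
    intro x hx i hi
    have hexp : (↑(∑ a : Fin k, bW.repr ⟨x, hx⟩ a • bW a) : E) = x := by
      rw [bW.sum_repr ⟨x, hx⟩]
    rw [← hexp]
    push_cast
    rw [inner_sum]
    refine Finset.sum_eq_zero fun a _ => ?_
    rw [real_inner_smul_right]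
    have hmem : (⟨a, a.2.trans_le hkd1⟩ : Fin d1) ∈ s := by
      simpa [s] using a.2
    have : (bW a : E) = b ⟨a, a.2.trans_le hkd1⟩ := by
      rw [hb _ hmem]
      simp [v, a.2]
    rw [this, orthonormal_iff_ite.mp b.orthonormal]
    have hne : i ≠ ⟨a, a.2.trans_le hkd1⟩ := by
      intro hcontra
      have : (i : ℕ) = a := congrArg Fin.val hcontra
      omega
    rw [if_neg hne, mul_zero]
  -- reconstruction on W from the first r basis vectors
  have hrec : ∀ x : E, x ∈ W → ∀ i : Fin d1,
      ∑ q : Fin r, (inner ℝ (b (Fin.castLE hr q)) x : ℝ) * (b (Fin.castLE hr q) : E) i = x i := by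
    intro x hx i
    have hfull : ∑ i' : Fin d1, (inner ℝ (b i') x : ℝ) * (b i' : E) i = x i := by
      conv_rhs => rw [← b.sum_repr x]
      rw [WithLp.ofLp_sum, Finset.sum_apply i Finset.univ]
      refine Finset.sum_congr rfl fun i' _ => ?_
      rw [b.repr_apply_apply x i']
      rfl
    rw [← hfull]
    rw [show (Finset.univ : Finset (Fin d1)) = ((Finset.univ : Finset (Fin r)).map (Fin.castLEEmb hr)) ∪ (Finset.univ \ ((Finset.univ : Finset (Fin r)).map (Fin.castLEEmb hr))) by
      rw [Finset.union_sdiff_of_subset (Finset.subset_univ _)]]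
    rw [Finset.sum_union (Finset.disjoint_sdiff), Finset.sum_map]
    have hz : ∑ i' ∈ Finset.univ \ ((Finset.univ : Finset (Fin r)).map (Fin.castLEEmb hr)),
        (inner ℝ (b i') x : ℝ) * (b i' : E) i = 0 := by
      refine Finset.sum_eq_zero fun i' hi' => ?_
      have : k ≤ (i' : ℕ) := by
        by_contra hcon
        push_neg at hcon
        have hir : (i' : ℕ) < r := lt_of_lt_of_le hcon hkr
        have : i' ∈ (Finset.univ : Finset (Fin r)).map (Fin.castLEEmb hr) :=
          Finset.mem_map.mpr ⟨⟨i', hir⟩, Finset.mem_univ _, rfl⟩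
        simp [this] at hi'
      rw [hvan x hx i' this, zero_mul]
    rw [hz, add_zero]
    rfl
  -- define B
  refine ⟨Matrix.of fun i (q : Fin r) => (b (Fin.castLE hr q) : E) i, ?_, ?_⟩
  · ext q l
    have : (∑ i : Fin d1, (b (Fin.castLE hr q) : E) i * (b (Fin.castLE hr l) : E) i)
        = (inner ℝ (b (Fin.castLE hr q)) (b (Fin.castLE hr l)) : ℝ) := by
      rw [PiLp.inner_apply]
      simp [RCLike.inner_apply]
      exact Finset.sum_congr rfl fun _ _ => mul_comm _ _
    simp only [Matrix.mul_apply, Matrix.transpose_apply, Matrix.of_apply]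
    rw [this, orthonormal_iff_ite.mp b.orthonormal, Matrix.one_apply]
    simp [Fin.castLE_inj]
  · ext i j
    have hAcol : ∀ i' : Fin d1, A i' j = (e (Aᵀ j) : E) i' := fun i' => rfl
    have hBA : ∀ q : Fin r, (∑ i' : Fin d1, (b (Fin.castLE hr q) : E) i' * A i' j)
        = (inner ℝ (b (Fin.castLE hr q)) (e (Aᵀ j)) : ℝ) := by
      intro q
      rw [PiLp.inner_apply]
      simp only [RCLike.inner_apply, conj_trivial]
      exact Finset.sum_congr rfl fun i' _ => by rw [hAcol i']; ring
    simp only [Matrix.mul_apply, Matrix.transpose_apply, Matrix.of_apply]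
    have := hrec (e (Aᵀ j)) (hcol j) i
    calc ∑ q : Fin r, (b (Fin.castLE hr q) : E) i * ∑ i' : Fin d1, (b (Fin.castLE hr q) : E) i' * A i' j
        = ∑ q : Fin r, (inner ℝ (b (Fin.castLE hr q)) (e (Aᵀ j)) : ℝ) * (b (Fin.castLE hr q) : E) i := by
          refine Finset.sum_congr rfl fun q _ => ?_
          rw [hBA q]; ring
      _ = (e (Aᵀ j) : E) i := this
      _ = A i j := (hAcol i).symm




lemma exists_svd_approx {d1 d2 r : ℕ} (hr : r ≤ d1) (G : Matrix (Fin d1) (Fin d2) ℝ) :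
    ∃ B : Matrix (Fin d1) (Fin d2) ℝ, IsSVDApprox r G B := by
  classical
  set R := 2 * frob G with hR
  have hG0 : 0 ≤ frob G := frob_nonneg' G
  have hRnn : 0 ≤ R := by positivity
  set K : Set (Matrix (Fin d1) (Fin r) ℝ × Matrix (Fin r) (Fin d2) ℝ) :=
    {p | p.1ᵀ * p.1 = 1 ∧ frob p.2 ≤ R} with hK
  -- a feasible point
  set B0 : Matrix (Fin d1) (Fin r) ℝ :=
    Matrix.of fun i q => if (i : ℕ) = (q : ℕ) then 1 else 0 with hB0def
  have hB0 : B0ᵀ * B0 = 1 := by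
    ext q l
    simp only [Matrix.mul_apply, Matrix.transpose_apply, Matrix.of_apply, hB0def]
    rw [Finset.sum_eq_single (Fin.castLE hr q)]
    · by_cases h : q = l
      · subst h; simp [Matrix.one_apply]
      · have hne : ¬(((Fin.castLE hr q) : ℕ) = (l : ℕ)) := fun hc => h (Fin.ext (by simpa using hc))
        simp only [Matrix.one_apply, Fin.coe_castLE] at *
        rw [if_neg (fun hc : (q:ℕ) = (l:ℕ) => h (Fin.ext hc)), if_neg h, mul_zero]
    · intro i _ hne
      have : ¬ ((i : ℕ) = (q : ℕ)) := fun hc => hne (Fin.ext (by simp [hc]))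
      rw [if_neg this, zero_mul]
    · intro h; exact absurd (Finset.mem_univ _) h
  have hKne : K.Nonempty := ⟨(B0, 0), hB0, by rw [frob_zero]; exact hRnn⟩
  -- compactness
  have hclosed : IsClosed K := by
    have h1 : IsClosed {p : Matrix (Fin d1) (Fin r) ℝ × Matrix (Fin r) (Fin d2) ℝ |
        p.1ᵀ * p.1 = 1} :=
      isClosed_eq ((continuous_fst.matrix_transpose).matrix_mul continuous_fst) continuous_const
    have h2 : IsClosed {p : Matrix (Fin d1) (Fin r) ℝ × Matrix (Fin r) (Fin d2) ℝ |
        frob p.2 ≤ R} :=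
      isClosed_le (frob_continuous.comp continuous_snd) continuous_const
    exact h1.inter h2
  have hsub : K ⊆ (Set.univ.pi fun _ : Fin d1 => Set.univ.pi fun _ : Fin r =>
      Set.Icc (-1 : ℝ) 1) ×ˢ (Set.univ.pi fun _ : Fin r => Set.univ.pi fun _ : Fin d2 =>
      Set.Icc (-R) R) := by
    rintro ⟨B, C⟩ ⟨hBo, hCf⟩
    constructor
    · intro i _ 
      intro q _
      have hdiag : ∑ i', B i' q * B i' q = 1 := by
        have := congrFun (congrFun hBo q) q
        simpa [Matrix.mul_apply, Matrix.transpose_apply, Matrix.one_apply] using this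
      have hle : B i q * B i q ≤ 1 := by
        rw [← hdiag]
        exact Finset.single_le_sum (f := fun i' => B i' q * B i' q)
          (fun _ _ => mul_self_nonneg _) (Finset.mem_univ i)
      have := abs_le_one_iff_mul_self_le_one.mpr hle
      exact ⟨neg_le_of_abs_le this, le_of_abs_le this⟩
    · intro q _
      intro j _
      exact frob_entry_bound hRnn hCf q j
  have hKc : IsCompact K := by
    refine IsCompact.of_isClosed_subset ?_ hclosed hsub
    exact ((isCompact_univ_pi fun _ => isCompact_univ_pi fun _ => isCompact_Icc).prod
      (isCompact_univ_pi fun _ => isCompact_univ_pi fun _ => isCompact_Icc))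
  have hcont : Continuous fun p : Matrix (Fin d1) (Fin r) ℝ × Matrix (Fin r) (Fin d2) ℝ =>
      frob (G - p.1 * p.2) :=
    frob_continuous.comp (continuous_const.sub (continuous_fst.matrix_mul continuous_snd))
  obtain ⟨p0, hp0K, hmin⟩ := hKc.exists_isMinOn hKne hcont.continuousOn
  refine ⟨p0.1 * p0.2, ?_, ?_⟩
  · exact (Matrix.rank_mul_le_left _ _).trans (Matrix.rank_le_width p0.1)
  · intro C hC
    by_cases hCR : frob C ≤ R
    · obtain ⟨B', hB'o, hB'f⟩ := exists_orth_factor hr C hC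
      have hfC : frob (B'ᵀ * C) ≤ R := by
        have : frob (B' * (B'ᵀ * C)) = frob (B'ᵀ * C) := frob_mul_orth hB'o _
        rw [hB'f] at this
        rw [← this]; exact hCR
      have hmem : (B', B'ᵀ * C) ∈ K := ⟨hB'o, hfC⟩
      have := isMinOn_iff.mp hmin _ hmem
      rwa [hB'f] at this
    · push_neg at hCR
      have h1 : frob (G - p0.1 * p0.2) ≤ frob G := by
        have := isMinOn_iff.mp hmin (B0, (0 : Matrix (Fin r) (Fin d2) ℝ))
          ⟨hB0, by rw [frob_zero]; exact hRnn⟩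
        simpa using this
      have h2 : frob C ≤ frob (G - C) + frob G := by
        have : C - G + G = C := by abel
        calc frob C = frob (C - G + G) := by rw [this]
          _ ≤ frob (C - G) + frob G := frob_add_le _ _
          _ = frob (G - C) + frob G := by rw [frob_sub_rev]
      linarith

lemma svd_inner_eq_zero {d1 d2 r : ℕ} {G B : Matrix (Fin d1) (Fin d2) ℝ}
    (hB : IsSVDApprox r G B) : minner (G - B) B = 0 := by
  have hmin : ∀ t : ℝ, ‖toE G - toE B‖ ≤ ‖toE G - t • toE B‖ := by
    intro t
    have hrk : (t • B).rank ≤ r := by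
      have h : t • B = (t • (1 : Matrix (Fin d1) (Fin d1) ℝ)) * B := by
        rw [Matrix.smul_mul, Matrix.one_mul]
      rw [h]
      exact (Matrix.rank_mul_le_right _ _).trans hB.1
    have := hB.2 (t • B) hrk
    rwa [frob_eq_norm, frob_eq_norm, toE_sub, toE_sub, toE_smul] at this
  set g := toE G
  set v := toE B
  set I : ℝ := inner ℝ (g - v) v with hI
  have key : ∀ s : ℝ, 2 * s * I ≤ s ^ 2 * ‖v‖ ^ 2 := by
    intro s
    have h := hmin (1 + s)
    have hexp : g - (1 + s) • v = (g - v) - s • v := by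
      rw [add_smul, one_smul]; abel
    rw [hexp] at h
    have hsq := pow_le_pow_left₀ (norm_nonneg _) h 2
    have hexp2 : ‖g - v - s • v‖ ^ 2 = ‖g - v‖ ^ 2 - 2 * (s * I) + s ^ 2 * ‖v‖ ^ 2 := by
      rw [norm_sub_sq_real (g - v) (s • v), real_inner_smul_right, norm_smul]
      simp only [Real.norm_eq_abs, mul_pow, sq_abs]
      try rw [hI]
      try ring
    rw [hexp2] at hsq
    nlinarith [hsq]
  have hI0 : I = 0 := by
    by_cases hv : ‖v‖ = 0
    · have : v = 0 := norm_eq_zero.mp hv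
      rw [hI, this, inner_zero_right]
    · have hN : (0:ℝ) < ‖v‖ ^ 2 := by positivity
      have := key (I / ‖v‖ ^ 2)
      have hI2 : I ^ 2 ≤ 0 := by
        have hrw : 2 * (I / ‖v‖ ^ 2) * I = 2 * I ^ 2 / ‖v‖ ^ 2 := by ring
        have hN' : ‖v‖ ^ 2 ≠ 0 := ne_of_gt hN
        have hrw2 : (I / ‖v‖ ^ 2) ^ 2 * ‖v‖ ^ 2 = I ^ 2 / ‖v‖ ^ 2 := by
          field_simp
        rw [hrw, hrw2] at this
        have := (div_le_div_iff_of_pos_right hN).mp this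
        linarith
      nlinarith [sq_nonneg I]
  rw [minner_eq_inner, toE_sub]
  exact hI0

/-- Frobenius norm of the projected sub-gradient:
`‖P_T(G)‖_F ≤ √2 ‖G‖_{F,r}`. -/
theorem statement16 :
    ∀ (d1 d2 r : ℕ), d2 ≤ d1 → 1 ≤ r →
    ∀ (M : Matrix (Fin d1) (Fin d2) ℝ)
      (U : Matrix (Fin d1) (Fin r) ℝ) (V : Matrix (Fin d2) (Fin r) ℝ)
      (S : Matrix (Fin r) (Fin r) ℝ),
      M.rank ≤ r →
      Uᵀ * U = 1 → Vᵀ * V = 1 →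
      (∀ i j : Fin r, i ≠ j → S i j = 0) →
      M = U * S * Vᵀ →
      ∀ G : Matrix (Fin d1) (Fin d2) ℝ,
        frob (tangentProj U V G) ≤ Real.sqrt 2 * truncFrob r G := by
  intro d1 d2 r hd hr1 M U V S hM hU hV hS hMeq G
  classical
  -- r ≤ d1
  have hrU : (Uᵀ * U).rank = r := by rw [hU, Matrix.rank_one, Fintype.card_fin]
  have hrd1 : r ≤ d1 := by
    calc r = (Uᵀ * U).rank := hrU.symm
      _ ≤ U.rank := Matrix.rank_mul_le_right _ _
      _ ≤ d1 := Matrix.rank_le_height U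
  obtain ⟨Bm, hBm⟩ := exists_svd_approx hrd1 G
  set P : Matrix (Fin d1) (Fin d1) ℝ := U * Uᵀ with hPdef
  set Q : Matrix (Fin d2) (Fin d2) ℝ := V * Vᵀ with hQdef
  have hPt : Pᵀ = P := by rw [hPdef, Matrix.transpose_mul, Matrix.transpose_transpose]
  have hQt : Qᵀ = Q := by rw [hQdef, Matrix.transpose_mul, Matrix.transpose_transpose]
  have hPP : P * P = P := by
    rw [hPdef, Matrix.mul_assoc, ← Matrix.mul_assoc Uᵀ U Uᵀ, hU, Matrix.one_mul]
  have hQQ : Q * Q = Q := by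
    rw [hQdef, Matrix.mul_assoc, ← Matrix.mul_assoc Vᵀ V Vᵀ, hV, Matrix.one_mul]
  set A1 : Matrix (Fin d1) (Fin d2) ℝ := P * G with hA1def
  set D : Matrix (Fin d1) (Fin d2) ℝ := G - P * G with hDdef
  set A2 : Matrix (Fin d1) (Fin d2) ℝ := D * Q with hA2def
  have hPD : P * D = 0 := by
    rw [hDdef, Matrix.mul_sub, ← Matrix.mul_assoc, hPP, sub_self]
  have hDP : Dᵀ * P = 0 := by
    have := congrArg Matrix.transpose hPD
    rwa [Matrix.transpose_mul, hPt, Matrix.transpose_zero] at this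
  -- decomposition
  have hdecomp : tangentProj U V G = A1 + A2 := by
    rw [tangentProj, hA2def, hDdef, hA1def, Matrix.sub_mul, hPdef, hQdef]
    simp only [Matrix.mul_assoc]
    abel
  -- orthogonality relations
  have o1 : minner A1 A2 = 0 := by
    rw [minner_eq_trace]
    have : A1ᵀ * A2 = 0 := by
      rw [hA1def, hA2def, Matrix.transpose_mul, hPt, Matrix.mul_assoc,
        ← Matrix.mul_assoc P D Q, hPD, Matrix.zero_mul, Matrix.mul_zero]
    rw [this, Matrix.trace_zero]
  have o2 : minner D A1 = 0 := by
    rw [minner_eq_trace]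
    have : Dᵀ * A1 = 0 := by
      rw [hA1def, ← Matrix.mul_assoc, hDP, Matrix.zero_mul]
    rw [this, Matrix.trace_zero]
  have o3 : minner (G - A2) A2 = 0 := by
    rw [minner_eq_trace, Matrix.transpose_sub, Matrix.sub_mul, Matrix.trace_sub]
    have e1 : A2ᵀ * A2 = Q * (Dᵀ * A2) := by
      rw [hA2def, Matrix.transpose_mul, hQt, Matrix.mul_assoc]
    have e2 : (A2ᵀ * A2).trace = (Dᵀ * A2).trace := by
      rw [e1, Matrix.trace_mul_comm]
      congr 1
      rw [hA2def, Matrix.mul_assoc Dᵀ (D * Q) Q, Matrix.mul_assoc D Q Q, hQQ]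
    rw [e2]
    have e3 : Gᵀ * A2 - Dᵀ * A2 = A1ᵀ * A2 := by
      rw [← Matrix.sub_mul, hDdef, ← hA1def, Matrix.transpose_sub, sub_sub_cancel]
    rw [← Matrix.trace_sub, e3]
    have : A1ᵀ * A2 = 0 := by
      rw [hA1def, hA2def, Matrix.transpose_mul, hPt, Matrix.mul_assoc,
        ← Matrix.mul_assoc P D Q, hPD, Matrix.zero_mul, Matrix.mul_zero]
    rw [this, Matrix.trace_zero]
  -- rank bounds
  have hrkA1 : A1.rank ≤ r := by
    rw [hA1def, hPdef, Matrix.mul_assoc]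
    exact (Matrix.rank_mul_le_left _ _).trans (Matrix.rank_le_width U)
  have hrkA2 : A2.rank ≤ r := by
    rw [hA2def, hQdef, ← Matrix.mul_assoc]
    exact (Matrix.rank_mul_le_right _ _).trans (Matrix.rank_le_height Vᵀ)
  -- Pythagoras
  have pa1 : frob G ^ 2 = frob D ^ 2 + frob A1 ^ 2 := by
    have : G = D + A1 := by rw [hDdef, hA1def]; abel
    conv_lhs => rw [this]
    exact pythag o2
  have pa2 : frob G ^ 2 = frob (G - A2) ^ 2 + frob A2 ^ 2 := by
    have : G = (G - A2) + A2 := by abel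
    conv_lhs => rw [this]
    exact pythag o3
  have pb : frob G ^ 2 = frob (G - Bm) ^ 2 + frob Bm ^ 2 := by
    have : G = (G - Bm) + Bm := by abel
    conv_lhs => rw [this]
    exact pythag (svd_inner_eq_zero hBm)
  have hm1 : frob (G - Bm) ^ 2 ≤ frob D ^ 2 := by
    have h := hBm.2 A1 hrkA1
    rw [show G - A1 = D by rw [hDdef, hA1def]] at h
    exact pow_le_pow_left₀ (frob_nonneg' _) h 2
  have hm2 : frob (G - Bm) ^ 2 ≤ frob (G - A2) ^ 2 := by
    exact pow_le_pow_left₀ (frob_nonneg' _) (hBm.2 A2 hrkA2) 2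
  have hA1B : frob A1 ^ 2 ≤ frob Bm ^ 2 := by linarith
  have hA2B : frob A2 ^ 2 ≤ frob Bm ^ 2 := by linarith
  -- combine
  have hTsq : frob (tangentProj U V G) ^ 2 ≤ 2 * frob Bm ^ 2 := by
    rw [hdecomp, pythag o1]
    linarith
  have hT : frob (tangentProj U V G) ≤ Real.sqrt 2 * frob Bm := by
    calc frob (tangentProj U V G)
        = Real.sqrt (frob (tangentProj U V G) ^ 2) := (Real.sqrt_sq (frob_nonneg' _)).symm
      _ ≤ Real.sqrt (2 * frob Bm ^ 2) := Real.sqrt_le_sqrt hTsq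
      _ = Real.sqrt 2 * frob Bm := by
          rw [Real.sqrt_mul (by norm_num : (0:ℝ) ≤ 2), Real.sqrt_sq (frob_nonneg' _)]
  -- bound by truncFrob
  have hBdd : BddAbove {x | ∃ B : Matrix (Fin d1) (Fin d2) ℝ, IsSVDApprox r G B ∧ x = frob B} := by
    refine ⟨2 * frob G, ?_⟩
    rintro x ⟨B', hB', rfl⟩
    have h0 : frob (G - B') ≤ frob G := by
      have := hB'.2 0 (by rw [Matrix.rank_zero]; exact Nat.zero_le r)
      rwa [sub_zero] at this
    have h1 : frob B' ≤ frob (B' - G) + frob G := by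
      have : B' - G + G = B' := by abel
      calc frob B' = frob (B' - G + G) := by rw [this]
        _ ≤ frob (B' - G) + frob G := frob_add_le _ _
    rw [frob_sub_rev] at h1
    linarith
  have hle : frob Bm ≤ truncFrob r G := le_csSup hBdd ⟨Bm, hBm, rfl⟩
  calc frob (tangentProj U V G) ≤ Real.sqrt 2 * frob Bm := hT
    _ ≤ Real.sqrt 2 * truncFrob r G :=
        mul_le_mul_of_nonneg_left hle (Real.sqrt_nonneg 2)

end Paper
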